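/- Let C ⊆ ℍⁿ_κ be a closed κ-hyperbolically convex set, p ∈ C, v ∈ T_p ℍⁿ_κ with v ≠ 0, and α > 0. Then ⟨v, log_p P_C(exp_p(−α v))⟩ ≤ −(1/α)·d(p, P_C(exp_p(−α v)))². -/

import Mathlib

noncomputable section

/-- Lorentzian inner product on ℝ^{n+1}. -/
def lip {n : ℕ} (x y : Fin (n+1) → ℝ) : ℝ :=
  (∑ i : Fin n, x i.castSucc * y i.castSucc) - x (Fin.last n) * y (Fin.last n)

/-- Lorentzian norm (of vectors with nonnegative self-product). -/
def lnorm {n : ℕ} (x : Fin (n+1) → ℝ) : ℝ := Real.sqrt (lip x x)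

/-- Euclidean dot product. -/
def edot {n : ℕ} (x y : Fin (n+1) → ℝ) : ℝ := ∑ i, x i * y i

/-- The matrix J = diag(1,…,1,−1) as a map. -/
def Jm {n : ℕ} (x : Fin (n+1) → ℝ) : Fin (n+1) → ℝ :=
  fun i => if i = Fin.last n then -(x i) else x i

/-- The κ-hyperbolic space form (hyperboloid model). -/
def Hyp {n : ℕ} (κ : ℝ) : Set (Fin (n+1) → ℝ) :=
  {p | lip p p = -1/κ ∧ 0 < p (Fin.last n)}

/-- Inverse hyperbolic cosine. -/
def arcosh (x : ℝ) : ℝ := Real.log (x + Real.sqrt (x^2 - 1))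

/-- Intrinsic distance on the κ-hyperbolic space form. -/
def dH {n : ℕ} (κ : ℝ) (p q : Fin (n+1) → ℝ) : ℝ :=
  (1 / Real.sqrt κ) * arcosh (-(κ * lip p q))

/-- Lorentzian projection onto the tangent space at p. -/
def projT {n : ℕ} (κ : ℝ) (p x : Fin (n+1) → ℝ) : Fin (n+1) → ℝ :=
  x + (κ * lip p x) • p

/-- Logarithm map of the κ-hyperbolic space form. -/
def logH {n : ℕ} (κ : ℝ) (p q : Fin (n+1) → ℝ) : Fin (n+1) → ℝ :=
  (dH κ p q / lnorm (projT κ p q)) • projT κ p q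

/-- Exponential map of the κ-hyperbolic space form. -/
def expH {n : ℕ} (κ : ℝ) (p v : Fin (n+1) → ℝ) : Fin (n+1) → ℝ :=
  Real.cosh (Real.sqrt κ * lnorm v) • p +
    (Real.sinh (Real.sqrt κ * lnorm v) / (Real.sqrt κ * lnorm v)) • v

/-- The cone spanned by a set. -/
def coneOf {n : ℕ} (C : Set (Fin (n+1) → ℝ)) : Set (Fin (n+1) → ℝ) :=
  {x | ∃ t : ℝ, 0 ≤ t ∧ ∃ p ∈ C, x = t • p}

/-- The Lorentz cone. -/
def LorentzCone {n : ℕ} : Set (Fin (n+1) → ℝ) :=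
  {x | lip x x ≤ 0 ∧ 0 ≤ x (Fin.last n)}

/-- The interior of the Lorentz cone. -/
def LorentzConeInt {n : ℕ} : Set (Fin (n+1) → ℝ) :=
  {x | lip x x < 0 ∧ 0 < x (Fin.last n)}

end

/-!
Write q = exp_p(−αv), s = √κ·d(p, q), t = √κ·d(p, z) and ρ = cosh(√κ·d(z, q)).
The variational inequality at y = p says that the angle at z of the triangle p z q is not acute,
which by the hyperbolic law of cosines reads cosh t · ρ ≤ cosh s. Hence t ≤ s, and expanding
⟨q, z⟩ along the geodesic from p bounds κα⟨v, z⟩ by −t sinh t, since tanh x / x is decreasing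
(equivalently, sinh x / x is increasing: sinh is convex on [0, ∞) and vanishes at 0).
As log_p z = (t / sinh t)(z − cosh t · p) and v ⊥ p, this gives
⟨v, log_p z⟩ ≤ −t² / (κα) = −d(p, z)² / α.
-/

lemma convexOn_sinh : ConvexOn ℝ (Set.Ici 0) Real.sinh := by
  refine MonotoneOn.convexOn_of_deriv (convex_Ici 0) Real.continuous_sinh.continuousOn
    Real.differentiable_sinh.differentiableOn ?_
  rw [Real.deriv_sinh, interior_Ici]
  intro x hx y hy hxy
  rw [Real.cosh_le_cosh, abs_of_pos hx, abs_of_pos hy]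
  exact hxy

lemma mul_sinh_le_mul_sinh {x y : ℝ} (hx : 0 ≤ x) (hxy : x ≤ y) :
    y * Real.sinh x ≤ x * Real.sinh y := by
  rcases hx.eq_or_lt with rfl | hx
  · simp
  rcases hxy.eq_or_lt with rfl | hxy
  · rfl
  simpa using convexOn_sinh.secant_mono_aux1 Set.self_mem_Ici
    (Set.mem_Ici.2 (hx.trans hxy).le) hx hxy

lemma mul_sinh_mul_cosh_le {s t : ℝ} (ht : 0 ≤ t) (hts : t ≤ s) :
    t * Real.sinh s * Real.cosh t ≤ s * Real.sinh t * Real.cosh s := by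
  have h := mul_sinh_le_mul_sinh (x := s - t) (y := s + t) (by linarith) (by linarith)
  rw [Real.sinh_sub, Real.sinh_add] at h
  linarith

lemma le_neg_mul_sinh_of_cosh_mul_le {s t u : ℝ} (hs : 0 < s) (ht : 0 ≤ t)
    (hρ : 1 ≤ Real.cosh t * Real.cosh s + Real.sinh s / s * u)
    (hobtuse : Real.cosh t * (Real.cosh t * Real.cosh s + Real.sinh s / s * u) ≤ Real.cosh s) :
    u ≤ -(t * Real.sinh t) := by
  have hts : t ≤ s := by
    have h := (le_mul_of_one_le_right (Real.cosh_pos t).le hρ).trans hobtuse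
    rwa [Real.cosh_le_cosh, abs_of_nonneg ht, abs_of_pos hs] at h
  have hu : Real.cosh t * Real.sinh s * u ≤ -(s * Real.sinh t ^ 2 * Real.cosh s) := by
    have hsr : Real.sinh s / s * s = Real.sinh s := div_mul_cancel₀ _ hs.ne'
    linear_combination s * hobtuse - Real.cosh t * u * hsr - s * Real.cosh s * Real.cosh_sq t
  have hkey := mul_le_mul_of_nonneg_right (mul_sinh_mul_cosh_le ht hts)
    (Real.sinh_nonneg_iff.2 ht)
  have hP : 0 < Real.cosh t * Real.sinh s := mul_pos (Real.cosh_pos t) (Real.sinh_pos_iff.2 hs)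
  refine le_of_mul_le_mul_left ?_ hP
  linarith

lemma div_sinh_mul_le_of_mul_le {κ α t w : ℝ} (hκ : 0 < κ) (hα : 0 < α) (ht : 0 ≤ t)
    (h : κ * α * w ≤ -(t * Real.sinh t)) :
    t / Real.sinh t * w ≤ -(1 / α) * (1 / √κ * t) ^ 2 := by
  rcases ht.eq_or_lt with rfl | ht
  · simp
  have hsinh := Real.sinh_pos_iff.2 ht
  calc t / Real.sinh t * w = t / (Real.sinh t * κ * α) * (κ * α * w) := by
        field_simp
    _ ≤ t / (Real.sinh t * κ * α) * (-(t * Real.sinh t)) :=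
        mul_le_mul_of_nonneg_left h (by positivity)
    _ = -(1 / α) * (1 / √κ * t) ^ 2 := by
        rw [mul_pow, div_pow, Real.sq_sqrt hκ.le]
        field_simp

section Lorentz

variable {n : ℕ}

lemma lip_comm (x y : Fin (n+1) → ℝ) : lip x y = lip y x := by
  simp only [lip, mul_comm]

@[simp] lemma lip_add_left (x y z : Fin (n+1) → ℝ) : lip (x + y) z = lip x z + lip y z := by
  simp only [lip, Pi.add_apply, add_mul, Finset.sum_add_distrib]
  ring

@[simp] lemma lip_smul_left (c : ℝ) (x y : Fin (n+1) → ℝ) : lip (c • x) y = c * lip x y := by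
  simp only [lip, Pi.smul_apply, smul_eq_mul, mul_sub, Finset.mul_sum, mul_assoc]

@[simp] lemma lip_add_right (x y z : Fin (n+1) → ℝ) : lip x (y + z) = lip x y + lip x z := by
  rw [lip_comm, lip_add_left, lip_comm y, lip_comm z]

@[simp] lemma lip_smul_right (c : ℝ) (x y : Fin (n+1) → ℝ) : lip x (c • y) = c * lip x y := by
  rw [lip_comm, lip_smul_left, lip_comm]

@[simp] lemma lip_neg_left (x y : Fin (n+1) → ℝ) : lip (-x) y = -lip x y := by
  simpa using lip_smul_left (-1) x y

@[simp] lemma lip_neg_right (x y : Fin (n+1) → ℝ) : lip x (-y) = -lip x y := by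
  simpa using lip_smul_right (-1) x y

lemma lip_add_mul_last (x y : Fin (n+1) → ℝ) :
    lip x y + x (Fin.last n) * y (Fin.last n) = ∑ i : Fin n, x i.castSucc * y i.castSucc := by
  rw [lip, sub_add_cancel]

lemma lip_self_add_mul_last_nonneg (x : Fin (n+1) → ℝ) :
    0 ≤ lip x x + x (Fin.last n) * x (Fin.last n) := by
  rw [lip_add_mul_last]
  exact Finset.sum_nonneg fun i _ => mul_self_nonneg _

lemma sq_lip_add_mul_last_le (x y : Fin (n+1) → ℝ) :
    (lip x y + x (Fin.last n) * y (Fin.last n)) ^ 2 ≤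
      (lip x x + x (Fin.last n) * x (Fin.last n)) *
        (lip y y + y (Fin.last n) * y (Fin.last n)) := by
  simpa only [lip_add_mul_last, sq] using Finset.sum_mul_sq_le_sq_mul_sq Finset.univ
    (fun i : Fin n => x i.castSucc) (fun i => y i.castSucc)

lemma eq_zero_of_lip_eq_zero_of_lip_self_nonpos {x w : Fin (n+1) → ℝ} (hx : lip x x < 0)
    (hxw : lip x w = 0) (hw : lip w w ≤ 0) : w = 0 := by
  have hcs := sq_lip_add_mul_last_le x w
  have hx0 := lip_self_add_mul_last_nonneg x
  have hw0 := lip_self_add_mul_last_nonneg w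
  have hlast : w (Fin.last n) = 0 := by
    rw [hxw, zero_add] at hcs
    have := mul_le_mul_of_nonneg_left (show lip w w + w (Fin.last n) * w (Fin.last n) ≤
      w (Fin.last n) * w (Fin.last n) by linarith) hx0
    have : -lip x x * (w (Fin.last n) * w (Fin.last n)) ≤ 0 := by nlinarith
    exact mul_self_eq_zero.1 (le_antisymm (nonpos_of_mul_nonpos_right this (by linarith))
      (mul_self_nonneg _))
  have hspatial : ∑ i : Fin n, w i.castSucc * w i.castSucc = 0 := by
    rw [← lip_add_mul_last, hlast, mul_zero, add_zero]
    exact le_antisymm hw (by simpa [hlast] using hw0)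
  rw [Finset.sum_eq_zero_iff_of_nonneg fun i _ => mul_self_nonneg _] at hspatial
  funext i
  induction i using Fin.lastCases with
  | last => exact hlast
  | cast i => exact mul_self_eq_zero.1 (hspatial i (Finset.mem_univ i))

lemma last_pos_of_lip_neg {x y : Fin (n+1) → ℝ} (hx : lip x x ≤ 0) (hy : lip y y < 0)
    (hxl : 0 < x (Fin.last n)) (hxy : lip x y < 0) : 0 < y (Fin.last n) := by
  have hcs := sq_lip_add_mul_last_le x y
  have hy0 := lip_self_add_mul_last_nonneg y
  by_contra! hyl
  nlinarith [mul_nonpos_of_nonneg_of_nonpos hxl.le hyl]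

end Lorentz

section Hyperboloid

variable {n : ℕ} {κ : ℝ}

lemma lip_self_neg_of_mem_Hyp (hκ : 0 < κ) {x : Fin (n+1) → ℝ} (hx : x ∈ Hyp κ) :
    lip x x < 0 :=
  hx.1 ▸ div_neg_of_neg_of_pos neg_one_lt_zero hκ

lemma one_le_neg_mul_lip (hκ : 0 < κ) {x y : Fin (n+1) → ℝ} (hx : x ∈ Hyp κ)
    (hy : y ∈ Hyp κ) : 1 ≤ -(κ * lip x y) := by
  obtain ⟨hxx, hxl⟩ := hx
  obtain ⟨hyy, hyl⟩ := hy
  have hcs := sq_lip_add_mul_last_le x y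
  have hx0 := lip_self_add_mul_last_nonneg x
  have hy0 := lip_self_add_mul_last_nonneg y
  set k := 1 / κ with hk_def
  have hk : 0 < k := by positivity
  rw [hxx, neg_div, ← hk_def] at hcs hx0
  rw [hyy, neg_div, ← hk_def] at hcs hy0
  set a := x (Fin.last n)
  set b := y (Fin.last n)
  have hab : k ≤ a * b := by
    refine nonneg_le_nonneg_of_sq_le_sq (mul_pos hxl hyl).le ?_
    nlinarith [mul_le_mul (show k ≤ a * a by linarith) (show k ≤ b * b by linarith) hk.le
      (mul_self_nonneg a)]
  -- (ab - k)² - (a² - k)(b² - k) = k (a - b)²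
  have hsq : (lip x y + a * b) ^ 2 ≤ (a * b - k) ^ 2 := by
    nlinarith [mul_nonneg hk.le (sq_nonneg (a - b))]
  have hle : lip x y ≤ -k := by linarith [(abs_le_of_sq_le_sq' hsq (by linarith)).2]
  have := mul_le_mul_of_nonneg_left hle hκ.le
  rw [hk_def, mul_neg, mul_one_div_cancel hκ.ne'] at this
  linarith

lemma lip_projT_projT (hκ : κ ≠ 0) {x : Fin (n+1) → ℝ} (hx : lip x x = -1 / κ)
    (y w : Fin (n+1) → ℝ) :
    lip (projT κ x y) (projT κ x w) = lip y w + κ * lip x y * lip x w := by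
  simp only [projT, lip_add_left, lip_add_right, lip_smul_left, lip_smul_right, hx, lip_comm y x]
  field_simp
  ring

lemma lip_projT_right_self (hκ : κ ≠ 0) {x : Fin (n+1) → ℝ} (hx : lip x x = -1 / κ)
    (y : Fin (n+1) → ℝ) : lip x (projT κ x y) = 0 := by
  simp only [projT, lip_add_right, lip_smul_right, hx]
  field_simp
  ring

lemma lnorm_projT (hκ : 0 < κ) {x y : Fin (n+1) → ℝ} (hx : x ∈ Hyp κ) (hy : y ∈ Hyp κ) :
    lnorm (projT κ x y) = Real.sinh (arcosh (-(κ * lip x y))) / √κ := by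
  rw [lnorm, lip_projT_projT hκ.ne' hx.1, hy.1,
    show arcosh = Real.arcosh from rfl, Real.sinh_arcosh (one_le_neg_mul_lip hκ hx hy),
    ← Real.sqrt_div' _ hκ.le]
  congr 1
  field_simp
  ring

lemma logH_eq_smul_projT (hκ : 0 < κ) {x y : Fin (n+1) → ℝ} (hx : x ∈ Hyp κ)
    (hy : y ∈ Hyp κ) :
    logH κ x y = (arcosh (-(κ * lip x y)) / Real.sinh (arcosh (-(κ * lip x y)))) •
      projT κ x y := by
  rw [logH, lnorm_projT hκ hx hy, dH, one_div_mul_eq_div,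
    div_div_div_cancel_right₀ (Real.sqrt_pos.2 hκ).ne']

lemma projT_eq_smul_logH (hκ : 0 < κ) {x y : Fin (n+1) → ℝ} (hx : x ∈ Hyp κ)
    (hy : y ∈ Hyp κ) :
    projT κ x y = (Real.sinh (arcosh (-(κ * lip x y))) / arcosh (-(κ * lip x y))) •
      logH κ x y := by
  have hlnorm := lnorm_projT hκ hx hy
  have hlogH := logH_eq_smul_projT hκ hx hy
  set θ := arcosh (-(κ * lip x y))
  have hθ0 : 0 ≤ θ := Real.arcosh_nonneg (one_le_neg_mul_lip hκ hx hy)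
  rcases hθ0.eq_or_lt with hθ | hθ
  · -- projT κ x y is then Lorentz-null and orthogonal to the timelike x, hence zero
    rw [← hθ, Real.sinh_zero, zero_div, lnorm, Real.sqrt_eq_zero'] at hlnorm
    rw [← hθ, Real.sinh_zero, zero_div, zero_smul]
    exact eq_zero_of_lip_eq_zero_of_lip_self_nonpos (lip_self_neg_of_mem_Hyp hκ hx)
      (lip_projT_right_self hκ.ne' hx.1 y) hlnorm
  · rw [hlogH, smul_smul, div_mul_div_cancel₀ hθ.ne',
      div_self (Real.sinh_pos_iff.2 hθ).ne', one_smul]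

lemma lip_projT_projT_nonpos_of_lip_logH_nonpos (hκ : 0 < κ) {x y w : Fin (n+1) → ℝ}
    (hx : x ∈ Hyp κ) (hy : y ∈ Hyp κ) (hw : w ∈ Hyp κ)
    (h : lip (logH κ x y) (logH κ x w) ≤ 0) : lip (projT κ x y) (projT κ x w) ≤ 0 := by
  have factor_nonneg : ∀ z ∈ Hyp κ,
      0 ≤ Real.sinh (arcosh (-(κ * lip x z))) / arcosh (-(κ * lip x z)) := fun z hz => by
    have hθ := Real.arcosh_nonneg (one_le_neg_mul_lip hκ hx hz)
    exact div_nonneg (Real.sinh_nonneg_iff.2 hθ) hθ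
  rw [projT_eq_smul_logH hκ hx hy, projT_eq_smul_logH hκ hx hw, lip_smul_left, lip_smul_right,
    ← mul_assoc]
  exact mul_nonpos_of_nonneg_of_nonpos (mul_nonneg (factor_nonneg y hy) (factor_nonneg w hw)) h

lemma lip_expH_left (x v y : Fin (n+1) → ℝ) :
    lip (expH κ x v) y = Real.cosh (√κ * lnorm v) * lip x y +
      Real.sinh (√κ * lnorm v) / (√κ * lnorm v) * lip v y := by
  rw [expH, lip_add_left, lip_smul_left, lip_smul_left]

lemma lip_self_pos_of_lip_eq_zero (hκ : 0 < κ) {x v : Fin (n+1) → ℝ} (hx : x ∈ Hyp κ)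
    (hxv : lip x v = 0) (hv : v ≠ 0) : 0 < lip v v := by
  by_contra! hvv
  exact hv (eq_zero_of_lip_eq_zero_of_lip_self_nonpos (lip_self_neg_of_mem_Hyp hκ hx) hxv hvv)

lemma expH_mem_Hyp (hκ : 0 < κ) {x v : Fin (n+1) → ℝ} (hx : x ∈ Hyp κ) (hxv : lip x v = 0)
    (hv : v ≠ 0) : expH κ x v ∈ Hyp κ := by
  have hvv := lip_self_pos_of_lip_eq_zero hκ hx hxv hv
  obtain ⟨s, hs_def⟩ : ∃ s, s = √κ * lnorm v := ⟨_, rfl⟩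
  have hs2 : s ^ 2 = κ * lip v v := by
    rw [hs_def, mul_pow, Real.sq_sqrt hκ.le, lnorm, Real.sq_sqrt hvv.le]
  have hs : s ≠ 0 := by
    rintro rfl
    nlinarith [mul_pos hκ hvv]
  have hxq : lip x (expH κ x v) = -Real.cosh s / κ := by
    rw [lip_comm, lip_expH_left, ← hs_def, hx.1, lip_comm, hxv]
    ring
  have hqq : lip (expH κ x v) (expH κ x v) = -1 / κ := by
    rw [lip_expH_left, ← hs_def, hxq, lip_comm, lip_expH_left, ← hs_def, hxv, mul_zero, zero_add]
    field_simp
    linear_combination (-(κ * lip v v)) * Real.cosh_sq_sub_sinh_sq s + (1 - Real.cosh s ^ 2) * hs2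
  refine ⟨hqq, last_pos_of_lip_neg (lip_self_neg_of_mem_Hyp hκ hx).le ?_ hx.2 ?_⟩
  · exact hqq ▸ div_neg_of_neg_of_pos neg_one_lt_zero hκ
  · exact hxq ▸ div_neg_of_neg_of_pos (neg_neg_of_pos (Real.cosh_pos s)) hκ

end Hyperboloid

theorem projection_descent_inequality_general {n : ℕ} (κ : ℝ) (hκ : 0 < κ)
    (C : Set (Fin (n+1) → ℝ)) (hC : C ⊆ Hyp κ)
    (p v : Fin (n+1) → ℝ) (hp : p ∈ C) (hv0 : v ≠ 0) (hv : lip p v = 0)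
    (α : ℝ) (hα : 0 < α)
    (z : Fin (n+1) → ℝ) (hzmem : z ∈ C)
    (hzvar : ∀ y ∈ C,
      lip (logH κ z (expH κ p (-(α • v)))) (logH κ z y) ≤ 0) :
    lip v (logH κ p z) ≤ -(1/α) * dH κ p z ^ 2 := by
  have hpH := hC hp
  have hzH := hC hzmem
  have hw : -(α • v) ≠ 0 := by simpa [hα.ne'] using hv0
  have hpw : lip p (-(α • v)) = 0 := by simp [hv]
  have hq := expH_mem_Hyp hκ hpH hpw hw
  have hobtuse := lip_projT_projT_nonpos_of_lip_logH_nonpos hκ hzH hq hpH (hzvar p hp)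
  rw [lip_projT_projT hκ.ne' hzH.1] at hobtuse
  have hρ := one_le_neg_mul_lip hκ hzH hq
  have hμ := one_le_neg_mul_lip hκ hpH hzH
  set q := expH κ p (-(α • v))
  obtain ⟨s, hs_def⟩ : ∃ s, s = √κ * lnorm (-(α • v)) := ⟨_, rfl⟩
  have hs : 0 < s := hs_def ▸ mul_pos (Real.sqrt_pos.2 hκ)
    (Real.sqrt_pos.2 (lip_self_pos_of_lip_eq_zero hκ hpH hpw hw))
  rw [logH_eq_smul_projT hκ hpH hzH, lip_smul_right, projT, lip_add_right, lip_smul_right,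
    lip_comm v p, hv, mul_zero, add_zero, dH]
  set t := arcosh (-(κ * lip p z))
  have hcosh : Real.cosh t = -(κ * lip p z) := Real.cosh_arcosh hμ
  have hqp : κ * lip q p = -Real.cosh s := by
    rw [lip_expH_left, ← hs_def, hpH.1, lip_comm, hpw, mul_zero, add_zero]
    field_simp
  have hzq : -(κ * lip z q) =
      Real.cosh t * Real.cosh s + Real.sinh s / s * (κ * α * lip v z) := by
    rw [lip_comm, lip_expH_left, ← hs_def, hcosh, lip_neg_left, lip_smul_left]
    ring
  refine div_sinh_mul_le_of_mul_le hκ hα (Real.arcosh_nonneg hμ) ?_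
  refine le_neg_mul_sinh_of_cosh_mul_le hs (Real.arcosh_nonneg hμ) (hzq ▸ hρ) ?_
  rw [← hzq, hcosh, lip_comm p z]
  linear_combination κ * hobtuse - hqp

/-- Key inequality for the gradient projection method: for p ∈ C, v ≠ 0 tangent at p
and α > 0, ⟨v, log_p P_C(exp_p(−αv))⟩ ≤ −(1/α)·d(p, P_C(exp_p(−αv)))². -/
theorem projection_descent_inequality {n : ℕ} (κ : ℝ) (hκ : 0 < κ)
    (C : Set (Fin (n+1) → ℝ)) (hC : C ⊆ Hyp κ) (hCc : IsClosed C)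
    (hconv : Convex ℝ (coneOf C))
    (p v : Fin (n+1) → ℝ) (hp : p ∈ C) (hv0 : v ≠ 0) (hv : lip p v = 0)
    (α : ℝ) (hα : 0 < α)
    (z : Fin (n+1) → ℝ) (hzmem : z ∈ C)
    (hzmin : ∀ y ∈ C, dH κ (expH κ p (-(α • v))) z ≤ dH κ (expH κ p (-(α • v))) y)
    (hzvar : ∀ y ∈ C,
      lip (logH κ z (expH κ p (-(α • v)))) (logH κ z y) ≤ 0) :
    lip v (logH κ p z) ≤ -(1/α) * dH κ p z ^ 2 :=
  projection_descent_inequality_general κ hκ C hC p v hp hv0 hv α hα z hzmem hzvar
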